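/- arXiv:math/0403475 — 7 statements merged into one kernel-verified Lean document; each statement's English description precedes it below -/
import Mathlib

section
/- Let F be the free group on x_1,...,x_{n+1}, F^{(k)} = ker(g_k) where g_k sends each generator to 1 ∈ Z/k, and let N be the normal closure in F^{(k)} of the elements x_i^k, 1 ≤ i ≤ n+1. Then the quotient F^{(k)}/N is a free group of rank n(k-1), freely generated by the images of τ^j(y_i) for 1 ≤ i ≤ n and 0 ≤ j ≤ k-2, where τ(w)=x_{n+1}wx_{n+1}^{-1} and y_i = x_i x_{n+1}^{-1}. -/
/-!
Let `H` be the free group on the symbols `e i j`. The map `toQuotient : H → K/N`,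
`e i j ↦ τ^j(y_i)`, has an inverse built from the regular wreath product `H ≀ ℤ/k`: send
`x_{n+1}` to the rotation `r` and `x_i` to `β_i⁻¹ r β_i`, where `β_i` is the base element whose
coordinate at `t` is `e i 0 ⋯ e i (t-1)`. All generators then go to elements of order `k`, so
the coordinate at `1`, which is multiplicative on `K`, factors through `K/N` and sends
`τ^j(y_i)` back to `e i j`. Conversely, pushing this map forward along `toQuotient` agrees on
generators with the Kaloujnine–Krasner embedding of `F` into `K ≀ ℤ/k` for the transversal
`x_{n+1}^t`, read modulo `N`; its coordinate at `1` is the identity of `K`.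
-/

def gk (n k : ℕ) : FreeGroup (Fin (n + 1)) →* Multiplicative (ZMod k) :=
  FreeGroup.lift fun _ => Multiplicative.ofAdd (1 : ZMod k)

def xlast (n : ℕ) : FreeGroup (Fin (n + 1)) := FreeGroup.of (Fin.last n)

def tau (n : ℕ) (w : FreeGroup (Fin (n + 1))) : FreeGroup (Fin (n + 1)) :=
  xlast n * w * (xlast n)⁻¹

def yy (n : ℕ) (i : Fin n) : FreeGroup (Fin (n + 1)) :=
  FreeGroup.of i.castSucc * (xlast n)⁻¹

/-- The normal closure, inside `ker g_k`, of the elements `x_i^k`, `1 ≤ i ≤ n+1`. -/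
def NN (n k : ℕ) : Subgroup (MonoidHom.ker (gk n k)) :=
  Subgroup.normalClosure
    {w : MonoidHom.ker (gk n k) | ∃ i : Fin (n + 1), (w : FreeGroup (Fin (n + 1))) = FreeGroup.of i ^ k}

instance (n k : ℕ) : (NN n k).Normal := Subgroup.normalClosure_normal

namespace RegularWreathProduct

variable {D D' Q : Type*} [Group D] [Group D'] [Group Q]

def mapLeft (f : D →* D') : D ≀ᵣ Q →* D' ≀ᵣ Q where
  toFun w := ⟨f ∘ w.left, w.right⟩
  map_one' := by ext <;> simp
  map_mul' v w := by ext <;> simp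

@[simp] lemma mapLeft_left (f : D →* D') (w : D ≀ᵣ Q) (q : Q) :
    (mapLeft f w).left q = f (w.left q) := rfl

@[simp] lemma mapLeft_right (f : D →* D') (w : D ≀ᵣ Q) : (mapLeft f w).right = w.right := rfl

variable (D Q) in
def evalOne : (rightHom : D ≀ᵣ Q →* Q).ker →* D where
  toFun w := (w : D ≀ᵣ Q).left 1
  map_one' := rfl
  map_mul' v w := by
    have hv : (v : D ≀ᵣ Q).right = 1 := v.2
    simp [hv]

lemma inl_mul_mul_inv_inl_left (c : Q) (w : D ≀ᵣ Q) (q : Q) :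
    (inl c * w * (inl c)⁻¹).left q = w.left (c⁻¹ * q) := by
  simp

variable {G : Type*} [Group G]

def kaloujnineKrasner (χ : G →* Q) (T : Q → G) (hT : ∀ q, χ (T q) = q) :
    G →* χ.ker ≀ᵣ Q where
  toFun g := ⟨fun q => ⟨(T q)⁻¹ * g * T ((χ g)⁻¹ * q), by simp [hT]⟩, χ g⟩
  map_one' := by ext <;> simp
  map_mul' g h := by ext <;> simp [mul_assoc]

@[simp] lemma kaloujnineKrasner_left_apply (χ : G →* Q) (T : Q → G) (hT : ∀ q, χ (T q) = q)
    (g : G) (q : Q) :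
    ((kaloujnineKrasner χ T hT g).left q : G) = (T q)⁻¹ * g * T ((χ g)⁻¹ * q) := rfl

@[simp] lemma kaloujnineKrasner_right (χ : G →* Q) (T : Q → G) (hT : ∀ q, χ (T q) = q)
    (g : G) : (kaloujnineKrasner χ T hT g).right = χ g := rfl

lemma kaloujnineKrasner_left_one (χ : G →* Q) (T : Q → G) (hT : ∀ q, χ (T q) = q)
    (hT1 : T 1 = 1) (g : χ.ker) : (kaloujnineKrasner χ T hT g).left 1 = g := by
  have hg : χ g = 1 := g.2
  ext
  simp [hT1, hg]

end RegularWreathProduct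

namespace QuotientFree

open RegularWreathProduct Multiplicative

variable {n k : ℕ}

lemma gk_of (m : Fin (n + 1)) : gk n k (.of m) = ofAdd 1 :=
  FreeGroup.lift_apply_of

lemma gk_of_pow (m : Fin (n + 1)) (t : ℕ) : gk n k (.of m ^ t) = ofAdd (t : ZMod k) := by
  simp [gk_of, ← ofAdd_nsmul]

lemma tau_iterate (t : ℕ) (w : FreeGroup (Fin (n + 1))) :
    (tau n)^[t] w = xlast n ^ t * w * (xlast n ^ t)⁻¹ := by
  induction t with
  | zero => simp
  | succ t ih =>
    rw [Function.iterate_succ_apply', ih, tau]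
    group

lemma tau_iterate_yy_mem_ker (i : Fin n) (t : ℕ) : (tau n)^[t] (yy n i) ∈ (gk n k).ker := by
  simp [tau_iterate, yy, xlast, gk_of]

def powRatio (m : Fin (n + 1)) (t : ℕ) : (gk n k).ker :=
  ⟨.of m ^ t * (xlast n ^ t)⁻¹, by simp [xlast, gk_of_pow]⟩

lemma powRatio_zero (m : Fin (n + 1)) : powRatio (k := k) m 0 = 1 := by
  ext
  simp [powRatio]

lemma powRatio_last (t : ℕ) : powRatio (k := k) (Fin.last n) t = 1 := by
  ext
  simp [powRatio, xlast]

/- Mathlib's wreath product moves coordinates by `q ↦ c⁻¹ * q`, so the coordinate `q` is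
matched with the exponent `invVal q` of `x_{n+1}`. -/
def invVal (q : Multiplicative (ZMod k)) : ℕ := (toAdd q⁻¹).val

lemma invVal_lt [NeZero k] (q : Multiplicative (ZMod k)) : invVal q < k := ZMod.val_lt _

lemma invVal_one : invVal (1 : Multiplicative (ZMod k)) = 0 := by simp [invVal]

lemma invVal_inv_ofAdd_one_mul [NeZero k] (q : Multiplicative (ZMod k)) :
    invVal ((ofAdd 1)⁻¹ * q) = (invVal q + 1) % k := by
  simp [invVal, ZMod.val_add, ZMod.val_one_eq_one_mod, add_comm]

lemma invVal_inv_ofAdd_one_pow {t : ℕ} (ht : t < k) :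
    invVal (ofAdd (1 : ZMod k) ^ t)⁻¹ = t := by
  simp [invVal, ← ofAdd_nsmul, ZMod.val_cast_of_lt ht]

lemma gk_xlast_pow_invVal [NeZero k] (q : Multiplicative (ZMod k)) :
    gk n k (xlast n ^ invVal q) = q⁻¹ := by
  simp [xlast, gk_of_pow, invVal]

def letter (i : Fin n) (s : ℕ) : FreeGroup (Fin n × Fin (k - 1)) :=
  if h : s < k - 1 then .of (i, ⟨s, h⟩) else 1

def prefixWord (m : Fin (n + 1)) (t : ℕ) : FreeGroup (Fin n × Fin (k - 1)) :=
  Fin.lastCases 1 (fun i => ((List.range t).map (letter i)).prod) m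

lemma prefixWord_last (t : ℕ) : prefixWord (k := k) (Fin.last n) t = 1 := by
  simp [prefixWord]

lemma prefixWord_castSucc_succ (i : Fin n) (t : ℕ) :
    prefixWord (k := k) i.castSucc (t + 1) = prefixWord i.castSucc t * letter i t := by
  simp [prefixWord, List.range_succ]

variable (n k) in
def toWreath :
    FreeGroup (Fin (n + 1)) →* FreeGroup (Fin n × Fin (k - 1)) ≀ᵣ Multiplicative (ZMod k) :=
  FreeGroup.lift fun m =>
    MulAut.conj (⟨fun q => prefixWord m (invVal q), 1⟩ : _ ≀ᵣ _)⁻¹ (inl (ofAdd 1))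

lemma toWreath_of_left [NeZero k] (m : Fin (n + 1)) (q : Multiplicative (ZMod k)) :
    (toWreath n k (.of m)).left q =
      (prefixWord m (invVal q))⁻¹ * prefixWord m ((invVal q + 1) % k) := by
  simp [toWreath, invVal_inv_ofAdd_one_mul]

lemma toWreath_xlast : toWreath n k (xlast n) = inl (ofAdd 1) := by
  have : (⟨fun q => prefixWord (k := k) (Fin.last n) (invVal q), 1⟩ :
      FreeGroup (Fin n × Fin (k - 1)) ≀ᵣ Multiplicative (ZMod k)) = 1 := by
    ext <;> simp [prefixWord_last]
  simp [toWreath, xlast, this]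

lemma toWreath_of_pow_card (m : Fin (n + 1)) : toWreath n k (.of m) ^ k = 1 := by
  have : ofAdd (1 : ZMod k) ^ k = 1 := by simp [← ofAdd_nsmul]
  rw [toWreath, FreeGroup.lift_apply_of, ← map_pow, ← map_pow, this, map_one, map_one]

lemma rightHom_comp_toWreath : rightHom.comp (toWreath n k) = gk n k :=
  FreeGroup.ext_hom _ _ fun m => by simp [toWreath, gk_of]

variable (n k) in
def ofKer : (gk n k).ker →* FreeGroup (Fin n × Fin (k - 1)) :=
  (evalOne _ _).comp <| ((toWreath n k).comp (gk n k).ker.subtype).codRestrict _ fun w => by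
    simpa [← rightHom_comp_toWreath] using w.2

lemma ofKer_apply (w : (gk n k).ker) : ofKer n k w = (toWreath n k w).left 1 := rfl

lemma NN_le_ker_ofKer : NN n k ≤ (ofKer n k).ker := by
  refine Subgroup.normalClosure_le_normal ?_
  rintro w ⟨m, hw⟩
  simp [ofKer_apply, hw, toWreath_of_pow_card]

lemma ofKer_tau_iterate_yy (i : Fin n) {t : ℕ} (ht : t < k - 1) :
    ofKer n k ⟨_, tau_iterate_yy_mem_ker i t⟩ = .of (i, ⟨t, ht⟩) := by
  have : NeZero k := ⟨by omega⟩
  have hconj : toWreath n k ((tau n)^[t] (yy n i)) =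
      inl (ofAdd 1 ^ t) * (toWreath n k (.of i.castSucc) * (inl (ofAdd 1))⁻¹) *
        (inl (ofAdd 1 ^ t))⁻¹ := by
    simp [tau_iterate, yy, toWreath_xlast]
  rw [ofKer_apply, hconj, inl_mul_mul_inv_inl_left, mul_one]
  simp [toWreath_of_left, invVal_inv_ofAdd_one_pow (by omega : t < k),
    Nat.mod_eq_of_lt (by omega : t + 1 < k), prefixWord_castSucc_succ, letter, ht]

variable (n k) in
def toQuotient : FreeGroup (Fin n × Fin (k - 1)) →* (gk n k).ker ⧸ NN n k :=
  FreeGroup.lift fun p => QuotientGroup.mk ⟨_, tau_iterate_yy_mem_ker p.1 p.2⟩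

lemma toQuotient_prefixWord (m : Fin (n + 1)) {t : ℕ} (ht : t < k) :
    toQuotient n k (prefixWord m t) = QuotientGroup.mk (powRatio m t) := by
  induction m using Fin.lastCases with
  | last => simp [prefixWord_last, powRatio_last]
  | cast i =>
    induction t with
    | zero => simp [prefixWord, powRatio_zero]
    | succ t ih =>
      rw [prefixWord_castSucc_succ, map_mul, ih (by omega), letter, dif_pos (by omega),
        toQuotient, FreeGroup.lift_apply_of, ← QuotientGroup.mk_mul]
      congr 1
      ext
      simp [powRatio, tau_iterate, yy, xlast]
      group

/- The left side is a Schreier generator of `K` for the transversal `x_{n+1}^a`; the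
wrap-around `a + 1 = k` costs exactly the relator `x_m^k`. -/
lemma mk_schreierGen_eq (m : Fin (n + 1)) {a : ℕ} (ha : a < k)
    (h : xlast n ^ a * .of m * (xlast n ^ ((a + 1) % k))⁻¹ ∈ (gk n k).ker) :
    (QuotientGroup.mk ⟨_, h⟩ : (gk n k).ker ⧸ NN n k) =
      (QuotientGroup.mk (powRatio m a))⁻¹ * QuotientGroup.mk (powRatio m ((a + 1) % k)) := by
  rw [← QuotientGroup.mk_inv, ← QuotientGroup.mk_mul]
  generalize hb : (a + 1) % k = b at h ⊢
  rcases (by omega : a + 1 < k ∨ a + 1 = k) with hlt | heq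
  · obtain rfl : b = a + 1 := by rw [← hb, Nat.mod_eq_of_lt hlt]
    congr 1
    ext
    simp [powRatio]
    group
  · obtain rfl : b = 0 := by rw [← hb, heq, Nat.mod_self]
    rw [powRatio_zero, mul_one, eq_comm, QuotientGroup.eq]
    refine Subgroup.subset_normalClosure ⟨m, ?_⟩
    simp [powRatio, ← heq]
    group

variable (n k) in
def transversal (q : Multiplicative (ZMod k)) : FreeGroup (Fin (n + 1)) :=
  (xlast n ^ invVal q)⁻¹

lemma gk_transversal [NeZero k] (q : Multiplicative (ZMod k)) :
    gk n k (transversal n k q) = q := by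
  simp [transversal, gk_xlast_pow_invVal]

lemma mapLeft_toQuotient_comp_toWreath [NeZero k] :
    (mapLeft (toQuotient n k)).comp (toWreath n k) =
      (mapLeft (QuotientGroup.mk' (NN n k))).comp
        (kaloujnineKrasner (gk n k) (transversal n k) gk_transversal) := by
  refine FreeGroup.ext_hom _ _ fun m => ?_
  ext q
  · have hq := invVal_lt q
    simp only [MonoidHom.comp_apply, mapLeft_left, toWreath_of_left, map_mul, map_inv,
      toQuotient_prefixWord m hq, toQuotient_prefixWord m (Nat.mod_lt _ (NeZero.pos k)),
      QuotientGroup.coe_mk']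
    rw [← mk_schreierGen_eq m hq (by simp [xlast, gk_of_pow, gk_of, ZMod.natCast_mod])]
    congr 1
    ext
    simp [transversal, gk_of, invVal_inv_ofAdd_one_mul]
  · simp [toWreath, gk_of]

lemma toQuotient_ofKer [NeZero k] (w : (gk n k).ker) :
    toQuotient n k (ofKer n k w) = QuotientGroup.mk w := by
  have h := congr_arg (fun f => (f (w : FreeGroup (Fin (n + 1)))).left 1)
    (mapLeft_toQuotient_comp_toWreath (n := n) (k := k))
  simp only [MonoidHom.comp_apply, mapLeft_left] at h
  rwa [kaloujnineKrasner_left_one _ _ _ (by simp [transversal, invVal_one])] at h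

variable (n k) in
def ofQuotient : (gk n k).ker ⧸ NN n k →* FreeGroup (Fin n × Fin (k - 1)) :=
  QuotientGroup.lift _ (ofKer n k) NN_le_ker_ofKer

lemma ofQuotient_comp_toQuotient : (ofQuotient n k).comp (toQuotient n k) = .id _ :=
  FreeGroup.ext_hom _ _ fun ⟨i, t⟩ => by
    simpa [ofQuotient, toQuotient] using ofKer_tau_iterate_yy i t.2

lemma toQuotient_comp_ofQuotient [NeZero k] : (toQuotient n k).comp (ofQuotient n k) = .id _ :=
  QuotientGroup.monoidHom_ext _ (MonoidHom.ext toQuotient_ofKer)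

end QuotientFree

/-- `ker(g_k)/N` is free of rank `n(k-1)`, freely generated by the
images of `τ^j(y_i)`, `1 ≤ i ≤ n`, `0 ≤ j ≤ k-2`. -/
theorem quotient_free (n k : ℕ) (hk : 0 < k) :
    ∃ e : FreeGroup (Fin n × Fin (k - 1)) ≃* (MonoidHom.ker (gk n k) ⧸ NN n k),
      ∀ (i : Fin n) (j : Fin (k - 1)) (w : MonoidHom.ker (gk n k)),
        (w : FreeGroup (Fin (n + 1))) = (tau n)^[(j : ℕ)] (yy n i) →
          e (FreeGroup.of (i, j)) = QuotientGroup.mk w := by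
  have : NeZero k := ⟨hk.ne'⟩
  refine ⟨(QuotientFree.toQuotient n k).toMulEquiv (QuotientFree.ofQuotient n k)
    QuotientFree.ofQuotient_comp_toQuotient QuotientFree.toQuotient_comp_ofQuotient,
    fun i j w hw => ?_⟩
  obtain rfl : w = ⟨(tau n)^[j] (yy n i), QuotientFree.tau_iterate_yy_mem_ker i j⟩ :=
    Subtype.ext hw
  simp [QuotientFree.toQuotient]
end

section
/- Let G be a group generated by elements y_1,...,y_n, z (images of x_1,...,x_n, x_{n+1} under some homomorphism setup), with τ denoting conjugation by z and suppose that in G: (a) τ^k(y_i) = y_i for all i, and (b) y_i τ(y_i) ⋯ τ^{k-1}(y_i) = 1 for all i, and (c) the relations τ^{u+1}(y_p y_i^{-1}) = τ^u(y_i^{-1} y_q) hold for all 0 ≤ u ≤ k-2 (for some fixed triple of indices i,p,q). Then the relation for u = k-1 also holds, i.e., τ^{k-1}(y_i τ(y_p) τ(y_i^{-1}) y_q^{-1}) = 1. -/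
/-- if `τ^k(y_i) = y_i`, the twisted products `y_i τ(y_i)⋯τ^{k-1}(y_i)`
are trivial, and the Wirtinger-type relations `τ^{u+1}(y_p y_i⁻¹) = τ^u(y_i⁻¹ y_q)`
hold for `0 ≤ u ≤ k-2`, then the relation for `u = k-1` also holds. -/
theorem last_relation_redundant {G : Type*} [Group G] (n k : ℕ) (hk : 1 ≤ k)
    (z : G) (y : Fin n → G) (τ : G → G) (hτ : ∀ w, τ w = z * w * z⁻¹)
    (i p q : Fin n)
    (hfix : ∀ i' : Fin n, τ^[k] (y i') = y i')
    (hprod : ∀ i' : Fin n, ((List.range k).map fun j => τ^[j] (y i')).prod = 1)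
    (hrel : ∀ u : ℕ, u < k - 1 →
      τ^[u + 1] (y p * (y i)⁻¹) = τ^[u] ((y i)⁻¹ * y q)) :
    τ^[k - 1] (y i * τ (y p) * τ ((y i)⁻¹) * (y q)⁻¹) = 1 := by
  have hconj : ∀ (m : ℕ) (w : G), τ^[m] w = z ^ m * w * (z ^ m)⁻¹ := by
    intro m
    induction m with
    | zero => intro w; simp
    | succ m ih =>
      intro w
      rw [Function.iterate_succ_apply, hτ, ih, pow_succ]
      group
  have hmul : ∀ (m : ℕ) (a b : G), τ^[m] (a * b) = τ^[m] a * τ^[m] b := by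
    intro m a b; simp only [hconj]; group
  have hinv : ∀ (m : ℕ) (a : G), τ^[m] a⁻¹ = (τ^[m] a)⁻¹ := by
    intro m a; simp only [hconj]; group
  -- key telescoping identity
  have key : ∀ m, m ≤ k - 1 →
      ((List.range m).map fun u => τ^[u] (y q)).prod =
        y i * ((List.range m).map fun u => τ^[u + 1] (y p)).prod * (τ^[m] (y i))⁻¹ := by
    intro m
    induction m with
    | zero => intro _; simp
    | succ m ih =>
      intro hm
      have hm' : m < k - 1 := hm
      have step : (τ^[m] (y i))⁻¹ * τ^[m] (y q) =
          τ^[m + 1] (y p) * (τ^[m + 1] (y i))⁻¹ := by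
        have h := hrel m hm'
        rw [hmul, hinv] at h
        rw [h, hmul, hinv]
      simp only [List.range_succ, List.map_append, List.prod_append,
        List.map_cons, List.map_nil, List.prod_cons, List.prod_nil, mul_one]
      rw [ih (le_of_lt hm')]
      calc y i * ((List.range m).map fun u => τ^[u + 1] (y p)).prod * (τ^[m] (y i))⁻¹ *
            τ^[m] (y q)
          = y i * ((List.range m).map fun u => τ^[u + 1] (y p)).prod *
            ((τ^[m] (y i))⁻¹ * τ^[m] (y q)) := by group
        _ = y i * ((List.range m).map fun u => τ^[u + 1] (y p)).prod *
            (τ^[m + 1] (y p) * (τ^[m + 1] (y i))⁻¹) := by rw [step]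
        _ = y i * (((List.range m).map fun u => τ^[u + 1] (y p)).prod * τ^[m + 1] (y p)) *
            (τ^[m + 1] (y i))⁻¹ := by group
  have hkk : k - 1 + 1 = k := Nat.succ_pred_eq_of_pos hk
  -- prod over q up to k-1
  have hq : ((List.range (k - 1)).map fun u => τ^[u] (y q)).prod = (τ^[k - 1] (y q))⁻¹ := by
    have h := hprod q
    rw [← hkk, List.range_succ, List.map_append, List.prod_append] at h
    simp only [List.map_cons, List.map_nil, List.prod_cons, List.prod_nil, mul_one] at h
    exact eq_inv_of_mul_eq_one_left h
  -- shifted prod over p up to k-1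
  have hp : ((List.range (k - 1)).map fun u => τ^[u + 1] (y p)).prod = (y p)⁻¹ := by
    have h := hprod p
    rw [← hkk, List.range_succ_eq_map, List.map_cons, List.prod_cons, List.map_map] at h
    simp only [Function.comp_def, Function.iterate_zero_apply, Nat.succ_eq_add_one] at h
    exact (inv_eq_of_mul_eq_one_right h).symm
  have final : (τ^[k - 1] (y q))⁻¹ = y i * (y p)⁻¹ * (τ^[k - 1] (y i))⁻¹ := by
    rw [← hq, ← hp, key (k - 1) le_rfl]
  have hkk' : (k - 1).succ = k := hkk
  have e1 : τ^[k - 1] (τ (y p)) = y p := by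
    rw [← Function.iterate_succ_apply, hkk', hfix]
  have e2 : τ^[k - 1] (τ ((y i)⁻¹)) = (y i)⁻¹ := by
    rw [← Function.iterate_succ_apply, hkk', hinv, hfix]
  rw [hmul, hmul, hmul, hinv, e1, e2, final]
  group
end

section
/- Let F be the free group on x_1,...,x_{n+1}, τ(w) = x_{n+1} w x_{n+1}^{-1}, y_i = x_i x_{n+1}^{-1}, and consider k = 2: in the quotient Q of ker(g_2) by the normal closure of {x_i^2 : 1 ≤ i ≤ n+1}, the image of τ(y_i) equals the inverse of the image of y_i, for every 1 ≤ i ≤ n. -/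
/-- The normal closure, inside `ker g_2`, of the squares `x_i²`, `1 ≤ i ≤ n+1`. -/
def NN2 (n : ℕ) : Subgroup (MonoidHom.ker (gk n 2)) :=
  Subgroup.normalClosure
    {w : MonoidHom.ker (gk n 2) | ∃ i : Fin (n + 1), (w : FreeGroup (Fin (n + 1))) = FreeGroup.of i ^ 2}

instance (n : ℕ) : (NN2 n).Normal := Subgroup.normalClosure_normal

/-- case `k = 2`: in `Q = ker(g₂)/⟪x₁²,…,x_{n+1}²⟫`, the image
of `τ(y_i)` is the inverse of the image of `y_i`. -/
theorem tau_y_eq_inv (n : ℕ) (i : Fin n)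
    (w w' : MonoidHom.ker (gk n 2))
    (hw : (w : FreeGroup (Fin (n + 1))) = tau n (yy n i))
    (hw' : (w' : FreeGroup (Fin (n + 1))) = yy n i) :
    (QuotientGroup.mk w : MonoidHom.ker (gk n 2) ⧸ NN2 n) =
      (QuotientGroup.mk w' : MonoidHom.ker (gk n 2) ⧸ NN2 n)⁻¹ := by
  have hker : ∀ j : Fin (n + 1), FreeGroup.of j ^ 2 ∈ MonoidHom.ker (gk n 2) := by
    intro j
    simp only [MonoidHom.mem_ker, gk, map_pow, FreeGroup.lift_apply_of]
    decide
  have hkera : xlast n * FreeGroup.of i.castSucc ∈ MonoidHom.ker (gk n 2) := by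
    simp only [MonoidHom.mem_ker, gk, map_mul, FreeGroup.lift_apply_of, xlast]
    decide
  set sN : MonoidHom.ker (gk n 2) := ⟨FreeGroup.of (Fin.last n) ^ 2, hker _⟩ with hsN
  set sI : MonoidHom.ker (gk n 2) := ⟨FreeGroup.of i.castSucc ^ 2, hker _⟩ with hsI
  set a : MonoidHom.ker (gk n 2) := ⟨xlast n * FreeGroup.of i.castSucc, hkera⟩ with ha
  have hNmem : sN ∈ NN2 n := Subgroup.subset_normalClosure ⟨Fin.last n, rfl⟩
  have hImem : sI ∈ NN2 n := Subgroup.subset_normalClosure ⟨i.castSucc, rfl⟩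
  have hmem : w * w' ∈ NN2 n := by
    have heq : w * w' = a * (sN⁻¹ * sI) * a⁻¹ := by
      apply Subtype.ext
      push_cast
      rw [hw, hw']
      simp only [tau, yy, xlast, hsN, hsI, ha]
      group
    rw [heq]
    exact Subgroup.Normal.conj_mem (by infer_instance) _ (mul_mem (inv_mem hNmem) hImem) a
  rw [eq_inv_iff_mul_eq_one, ← QuotientGroup.mk_mul, QuotientGroup.eq_one_iff]
  exact hmem
end

section
/- Let F be the free group on x_1,...,x_{n+1}, g_k : F → Z/k sending each generator to 1, and r ∈ ker(g_k). Then the normal closure of r in F, intersected with ker(g_k), equals the normal closure in ker(g_k) of the set {τ^u(r) : 0 ≤ u ≤ k-1}, where τ(w) = x_{n+1} w x_{n+1}^{-1}. Equivalently, the normal closure of r in F is generated as a normal subgroup of ker(g_k) by the conjugates τ^0(r),...,τ^{k-1}(r). -/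
set_option maxHeartbeats 1000000

lemma tau_iter (n : ℕ) (r : FreeGroup (Fin (n+1))) (u : ℕ) :
    (tau n)^[u] r = (xlast n)^u * r * ((xlast n)^u)⁻¹ := by
  induction u with
  | zero => simp
  | succ u ih =>
    rw [Function.iterate_succ_apply', ih, tau]
    group

lemma gk_pow_xlast (n k u : ℕ) :
    gk n k ((xlast n)^u) = Multiplicative.ofAdd (u : ZMod k) := by
  rw [map_pow]
  show (FreeGroup.lift _ (FreeGroup.of _))^u = _
  rw [FreeGroup.lift_apply_of, ← ofAdd_nsmul]
  congr 1
  simp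

lemma tau_mem_nc (n : ℕ) (r : FreeGroup (Fin (n+1))) (u : ℕ) :
    (tau n)^[u] r ∈ Subgroup.normalClosure {r} := by
  rw [tau_iter]
  exact Subgroup.normalClosure_normal.conj_mem _
    (Subgroup.subset_normalClosure (Set.mem_singleton r)) _

lemma conj_mem_nc {G : Type*} [Group G] (s : Set G) (a : G)
    (ha : a ∈ Subgroup.normalClosure s) (c : G) :
    c * a * c⁻¹ ∈ Subgroup.normalClosure s :=
  Subgroup.normalClosure_normal.conj_mem a ha c

/-- for `r ∈ ker g_k`, the normal closure of `r` in `F`,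
intersected with `ker g_k`, equals the normal closure in `ker g_k` of
`{τ^u(r) : 0 ≤ u ≤ k-1}`. -/
theorem normal_closure_in_kernel (n k : ℕ) (hk : 0 < k)
    (r : FreeGroup (Fin (n + 1))) (hr : r ∈ MonoidHom.ker (gk n k)) :
    (Subgroup.normalClosure {r}).subgroupOf (MonoidHom.ker (gk n k)) =
      Subgroup.normalClosure
        {w : MonoidHom.ker (gk n k) |
          ∃ u : ℕ, u < k ∧ (w : FreeGroup (Fin (n + 1))) = (tau n)^[u] r} := by
  haveI : NeZero k := ⟨hk.ne'⟩
  set K := MonoidHom.ker (gk n k) with hK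
  set S : Set K := {w : K | ∃ u : ℕ, u < k ∧ (w : FreeGroup (Fin (n+1))) = (tau n)^[u] r}
    with hS
  set T := Subgroup.normalClosure S with hT
  set M := Subgroup.map K.subtype T with hM
  have hr1 : gk n k r = 1 := hr
  have htauK : ∀ u : ℕ, (tau n)^[u] r ∈ K := by
    intro u
    rw [tau_iter]
    show gk n k _ = 1
    rw [map_mul, map_mul, map_inv, hr1, mul_one, mul_inv_cancel]
  have hxk : (xlast n)^k ∈ K := by
    show gk n k _ = 1
    rw [gk_pow_xlast, ZMod.natCast_self]
    rfl
  have hconjM : ∀ h ∈ K, ∀ m ∈ M, h * m * h⁻¹ ∈ M := by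
    intro h hh m hm
    rcases hm with ⟨m', hm', rfl⟩
    exact ⟨⟨h, hh⟩ * m' * ⟨h, hh⟩⁻¹,
      Subgroup.normalClosure_normal.conj_mem m' hm' ⟨h, hh⟩, rfl⟩
  have htauM : ∀ u : ℕ, (tau n)^[u] r ∈ M := by
    intro u
    have hx : (xlast n)^u = ((xlast n)^k)^(u/k) * (xlast n)^(u % k) := by
      rw [← pow_mul, ← pow_add, Nat.div_add_mod]
    have hmem : ((tau n)^[u % k] r) ∈ M := by
      refine ⟨⟨(tau n)^[u % k] r, htauK _⟩, Subgroup.subset_normalClosure ?_, rfl⟩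
      exact ⟨u % k, Nat.mod_lt _ hk, rfl⟩
    have h2 := hconjM _ (pow_mem hxk (u/k)) _ hmem
    rw [tau_iter] at h2 ⊢
    rw [hx]
    convert h2 using 1
    group
  have hmain : Subgroup.normalClosure {r} = M := by
    apply le_antisymm
    · show Subgroup.closure _ ≤ M
      rw [Subgroup.closure_le]
      intro a ha
      rcases Group.mem_conjugatesOfSet_iff.1 ha with ⟨b, hb, hab⟩
      rcases isConj_iff.1 hab with ⟨g, rfl⟩
      rw [Set.mem_singleton_iff.1 hb]
      set u : ℕ := (Multiplicative.toAdd (gk n k g)).val with hu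
      have hgu : g * ((xlast n)^u)⁻¹ ∈ K := by
        show gk n k _ = 1
        rw [map_mul, map_inv, gk_pow_xlast, hu, ZMod.natCast_val, ZMod.cast_id]
        simp
      have heq : g * r * g⁻¹ =
          (g * ((xlast n)^u)⁻¹) * ((tau n)^[u] r) * (g * ((xlast n)^u)⁻¹)⁻¹ := by
        rw [tau_iter]; group
      rw [heq]
      exact hconjM _ hgu _ (htauM u)
    · have hsub : ∀ w : K, w ∈ S → (w : FreeGroup (Fin (n+1))) ∈ Subgroup.normalClosure {r} := by
        rintro w ⟨u, -, hw⟩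
        rw [hw]
        exact tau_mem_nc n r u
      rintro m ⟨m', hm', rfl⟩
      refine Subgroup.closure_induction ?_ ?_ ?_ ?_ hm'
      · intro x hx
        rcases Group.mem_conjugatesOfSet_iff.1 hx with ⟨b, hb, hab⟩
        rcases isConj_iff.1 hab with ⟨c, rfl⟩
        have : K.subtype (c * b * c⁻¹)
            = (c : FreeGroup (Fin (n+1))) * b * (c : FreeGroup (Fin (n+1)))⁻¹ := rfl
        rw [this]
        exact conj_mem_nc _ _ (hsub b hb) _
      · exact one_mem _
      · intro x y _ _ hx hy; exact mul_mem hx hy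
      · intro x _ hx; exact inv_mem hx
  rw [hmain]
  show Subgroup.comap K.subtype (Subgroup.map K.subtype T) = T
  exact Subgroup.comap_map_eq_self_of_injective K.subtype_injective T
end

section
/- Let F be the free group on x_1,...,x_{n+1}, g_k : F → Z/k sending each generator to 1, F^{(k)} = ker(g_k). Then the normal closure in F of the set {x_i^k : 1 ≤ i ≤ n+1} is contained in F^{(k)}, and the quotient of F^{(k)} by this normal closure admits the presentation ⟨ x_{n+1}^k, τ^j(y_i) (1 ≤ i ≤ n, 0 ≤ j ≤ k-1) | x_{n+1}^k, y_i τ(y_i)⋯τ^{k-1}(y_i) (1 ≤ i ≤ n) ⟩, which is free of rank n(k-1) on the generators τ^j(y_i), 0 ≤ j ≤ k-2. -/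
/-- The normal closure in `F` of the set `{x_i^k : 1 ≤ i ≤ n+1}`. -/
def NF (n k : ℕ) : Subgroup (FreeGroup (Fin (n + 1))) :=
  Subgroup.normalClosure {w | ∃ i : Fin (n + 1), w = FreeGroup.of i ^ k}

instance (n k : ℕ) : ((NF n k).subgroupOf (MonoidHom.ker (gk n k))).Normal :=
  Subgroup.Normal.subgroupOf Subgroup.normalClosure_normal _

/-- The relators `x_{n+1}^k` and `y_i τ(y_i) ⋯ τ^{k-1}(y_i)` (for `1 ≤ i ≤ n`),
written in the generators `x_{n+1}^k` (index `none`) and `τ^j(y_i)` (index `(i,j)`). -/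
def quotRels (n k : ℕ) : Set (FreeGroup (Option (Fin n × Fin k))) :=
  {FreeGroup.of none} ∪
    {w | ∃ i : Fin n,
      w = ((List.finRange k).map fun j => FreeGroup.of (some (i, j))).prod}

/-!
The kernel of `gk` has index `k`, with Schreier transversal `1, t, …, t^(k-1)` for
`t = x_{n+1}`, so by Reidemeister–Schreier it is free on `t^k` and the `τ^j(y_i)`. The inverse of
evaluating Schreier words is the rewriting process, realised as a homomorphism from `F` to the
regular wreath product of the free group on these generators by `ℤ/k`: its coordinate at `b` is
the Schreier word of `w` read from the coset `t^b`.

Under this isomorphism the part of the normal closure of the `x_i^k` lying in the kernel is the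
normal closure, inside the kernel, of `t^k` and `x_i^k t^(-k) = y_i τ(y_i) ⋯ τ^(k-1)(y_i)`. That
subgroup is normal in all of `F`, since it is stable under conjugation by `t` and `F` is generated
by the kernel and `t`. Finally each relator `y_i τ(y_i) ⋯ τ^(k-1)(y_i)` eliminates the generator
`τ^(k-1)(y_i)` and the relator `t^k` kills the generator `t^k`, leaving the free group on the
`τ^j(y_i)` with `j ≤ k - 2`.
-/

theorem ZMod.val_add_one_of_lt {k : ℕ} {a : ZMod k} (h : a.val + 1 < k) :
    (a + 1).val = a.val + 1 := by
  have : NeZero k := ⟨by omega⟩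
  rw [ZMod.val_add, ZMod.val_one_eq_one_mod, Nat.add_mod_mod, Nat.mod_eq_of_lt h]

theorem ZMod.val_add_one_of_eq {k : ℕ} {a : ZMod k} (h : a.val + 1 = k) :
    (a + 1).val = 0 := by
  have : NeZero k := ⟨by omega⟩
  rw [ZMod.val_eq_zero, ← ZMod.natCast_zmod_val a, ← Nat.cast_add_one, h, ZMod.natCast_self]

theorem Subgroup.normal_of_conj_mem {G : Type*} [Group G] {K M : Subgroup G} {t : G}
    (hK : ∀ g : G, ∃ v ∈ K, ∃ m : ℕ, g = v * t ^ m) (hKM : ∀ v ∈ K, ∀ z ∈ M, v * z * v⁻¹ ∈ M)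
    (htM : ∀ z ∈ M, t * z * t⁻¹ ∈ M) : M.Normal where
  conj_mem z hz g := by
    obtain ⟨v, hv, m, rfl⟩ := hK g
    have hpow : t ^ m * z * (t ^ m)⁻¹ ∈ M := by
      induction m with
      | zero => simpa using hz
      | succ m ih => simpa [pow_succ', mul_assoc] using htM _ ih
    simpa [mul_assoc] using hKM v hv _ hpow

theorem List.prod_ofFn_pow_mul_mul_inv_pow_succ {G : Type*} [Group G] (t x : G) (m : ℕ) :
    (List.ofFn fun j : Fin m => t ^ (j : ℕ) * x * (t ^ ((j : ℕ) + 1))⁻¹).prod =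
      x ^ m * (t ^ m)⁻¹ := by
  induction m with
  | zero => simp
  | succ m ih =>
    rw [List.ofFn_succ', List.prod_concat]
    simp only [Fin.val_castSucc, Fin.val_last, ih]
    group

namespace QuotientPresentation

open Multiplicative

variable {n k : ℕ}

theorem gk_of (x : Fin (n + 1)) : gk n k (FreeGroup.of x) = ofAdd 1 :=
  FreeGroup.lift_apply_of

theorem gk_of_pow (x : Fin (n + 1)) (m : ℕ) : gk n k (FreeGroup.of x ^ m) = ofAdd (m : ZMod k) := by
  rw [map_pow, gk_of, ← ofAdd_nsmul, nsmul_one]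

theorem tau_iterate_yy (i : Fin n) (j : ℕ) :
    (tau n)^[j] (yy n i) = xlast n ^ j * FreeGroup.of i.castSucc * (xlast n ^ (j + 1))⁻¹ := by
  induction j with
  | zero => simp [yy]
  | succ j ih =>
    rw [Function.iterate_succ_apply', ih, tau]
    group

theorem tau_iterate_yy_mem_ker (i : Fin n) (j : ℕ) : (tau n)^[j] (yy n i) ∈ (gk n k).ker := by
  rw [tau_iterate_yy, MonoidHom.mem_ker, map_mul, map_mul, map_inv, xlast, gk_of_pow, gk_of_pow,
    gk_of, ← ofAdd_add, ← ofAdd_neg, ← ofAdd_add]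
  simp

variable (n k) in
def schreier : FreeGroup (Option (Fin n × Fin k)) →* FreeGroup (Fin (n + 1)) :=
  FreeGroup.lift fun
    | none => xlast n ^ k
    | some (i, j) => (tau n)^[j] (yy n i)

theorem schreier_of_none : schreier n k (FreeGroup.of none) = xlast n ^ k :=
  FreeGroup.lift_apply_of

theorem schreier_of_some (i : Fin n) (j : Fin k) :
    schreier n k (FreeGroup.of (some (i, j))) = (tau n)^[j] (yy n i) :=
  FreeGroup.lift_apply_of

theorem schreier_mem_ker (h : FreeGroup (Option (Fin n × Fin k))) :
    schreier n k h ∈ (gk n k).ker := by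
  suffices (gk n k).comp (schreier n k) = 1 from DFunLike.congr_fun this h
  refine FreeGroup.ext_hom _ _ fun
    | none => by
      rw [MonoidHom.comp_apply, schreier_of_none, xlast, gk_of_pow, ZMod.natCast_self]
      rfl
    | some (i, j) => by simpa [schreier_of_some] using tau_iterate_yy_mem_ker (k := k) i j

section Rewrite

variable [NeZero k]

variable (n k) in
def rewriteLetter (x : Fin (n + 1)) (a : ZMod k) : FreeGroup (Option (Fin n × Fin k)) :=
  Fin.lastCases 1 (fun i => FreeGroup.of (some (i, ⟨a.val, a.val_lt⟩))) x *
    if a.val + 1 = k then FreeGroup.of none else 1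

theorem schreier_rewriteLetter (x : Fin (n + 1)) (a : ZMod k) :
    schreier n k (rewriteLetter n k x a) =
      xlast n ^ a.val * FreeGroup.of x * (xlast n ^ (a + 1).val)⁻¹ := by
  by_cases hwrap : a.val + 1 = k
  · rw [ZMod.val_add_one_of_eq hwrap, pow_zero, inv_one, mul_one]
    induction x using Fin.lastCases with
    | last => simp [rewriteLetter, hwrap, schreier_of_none, ← pow_succ, xlast]
    | cast i =>
      have hpow : xlast n ^ k = xlast n ^ (a.val + 1) := by rw [hwrap]
      simp only [rewriteLetter, Fin.lastCases_castSucc, hwrap, if_true, map_mul,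
        schreier_of_some, schreier_of_none, tau_iterate_yy, hpow]
      group
  · rw [ZMod.val_add_one_of_lt (by have := a.val_lt; omega)]
    induction x using Fin.lastCases with
    | last => simp [rewriteLetter, hwrap, ← pow_succ, xlast]
    | cast i => simp [rewriteLetter, hwrap, schreier_of_some, tau_iterate_yy]

-- The right component is `(gk w)⁻¹` because multiplication in `≀ᵣ` shifts coordinates by the
-- inverse of the right component.
variable (n k) in
def rewrite :
    FreeGroup (Fin (n + 1)) →* FreeGroup (Option (Fin n × Fin k)) ≀ᵣ Multiplicative (ZMod k) :=
  FreeGroup.lift fun x => ⟨fun b => rewriteLetter n k x (toAdd b), ofAdd (-1)⟩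

theorem rewrite_of_left (x : Fin (n + 1)) (b : Multiplicative (ZMod k)) :
    (rewrite n k (.of x)).left b = rewriteLetter n k x (toAdd b) := by
  rw [rewrite, FreeGroup.lift_apply_of]

theorem rewrite_right (w : FreeGroup (Fin (n + 1))) : (rewrite n k w).right = (gk n k w)⁻¹ := by
  suffices RegularWreathProduct.rightHom.comp (rewrite n k) = (gk n k)⁻¹ from
    DFunLike.congr_fun this w
  exact FreeGroup.ext_hom _ _ fun x => by simp [rewrite, gk_of]

theorem rewrite_left_mul (w v : FreeGroup (Fin (n + 1))) (b : Multiplicative (ZMod k)) :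
    (rewrite n k (w * v)).left b =
      (rewrite n k w).left b * (rewrite n k v).left (gk n k w * b) := by
  rw [map_mul, RegularWreathProduct.mul_left, Pi.mul_apply, rewrite_right, inv_inv]

theorem rewrite_left_inv (w : FreeGroup (Fin (n + 1))) (b : Multiplicative (ZMod k)) :
    (rewrite n k w⁻¹).left b = ((rewrite n k w).left ((gk n k w)⁻¹ * b))⁻¹ := by
  rw [map_inv, RegularWreathProduct.inv_left, rewrite_right]
  rfl

variable (n) in
def transversal (b : Multiplicative (ZMod k)) : FreeGroup (Fin (n + 1)) :=
  xlast n ^ (toAdd b).val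

theorem schreier_rewrite_left (w : FreeGroup (Fin (n + 1))) (b : Multiplicative (ZMod k)) :
    schreier n k ((rewrite n k w).left b) =
      transversal n b * w * (transversal n (gk n k w * b))⁻¹ := by
  induction w generalizing b with
  | C1 => simp
  | of x =>
    rw [rewrite_of_left, schreier_rewriteLetter, gk_of, transversal,
      transversal, toAdd_mul, toAdd_ofAdd, add_comm 1 (toAdd b)]
  | inv_of x ih =>
    rw [rewrite_left_inv, map_inv, ih, mul_inv_cancel_left, map_inv]
    group
  | mul w v hw hv =>
    have hcoset : gk n k (w * v) * b = gk n k v * (gk n k w * b) := by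
      rw [map_mul]; ac_rfl
    rw [rewrite_left_mul, map_mul, hw, hv, hcoset]
    group

variable (n k) in
def rewriteKer : (gk n k).ker →* FreeGroup (Option (Fin n × Fin k)) where
  toFun w := (rewrite n k w).left 1
  map_one' := by simp
  map_mul' w v := by
    rw [Subgroup.coe_mul, rewrite_left_mul, MonoidHom.mem_ker.mp w.2, one_mul]

theorem schreier_rewriteKer (w : (gk n k).ker) : schreier n k (rewriteKer n k w) = w := by
  have h := schreier_rewrite_left (k := k) (w : FreeGroup (Fin (n + 1))) 1
  rwa [MonoidHom.mem_ker.mp w.2, one_mul, transversal, toAdd_one, ZMod.val_zero, pow_zero,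
    one_mul, inv_one, mul_one] at h

theorem rewrite_xlast_pow_left {m : ℕ} (hm : m ≤ k) :
    (rewrite n k (xlast n ^ m)).left 1 = if m = k then FreeGroup.of none else 1 := by
  induction m with
  | zero => simp [(NeZero.pos k).ne]
  | succ m ih =>
    have hmk : m < k := hm
    rw [pow_succ, rewrite_left_mul, ih hmk.le, if_neg hmk.ne, one_mul, xlast, gk_of_pow,
      mul_one, rewrite_of_left]
    simp [rewriteLetter, ZMod.val_cast_of_lt hmk]

variable (n k) in
def schreierKer : FreeGroup (Option (Fin n × Fin k)) →* (gk n k).ker :=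
  (schreier n k).codRestrict _ schreier_mem_ker

theorem rewrite_tau_iterate_yy_left (i : Fin n) (j : Fin k) :
    (rewrite n k ((tau n)^[j] (yy n i))).left 1 = FreeGroup.of (some (i, j)) := by
  have hcoset : (gk n k (xlast n ^ (j + 1 : ℕ)))⁻¹ *
      (gk n k (xlast n ^ (j : ℕ) * FreeGroup.of i.castSucc) * 1) = 1 := by
    rw [mul_one, map_mul, xlast, gk_of_pow, gk_of_pow, gk_of, Nat.cast_succ, ofAdd_add,
      inv_mul_cancel]
  rw [tau_iterate_yy, rewrite_left_mul, rewrite_left_mul, rewrite_left_inv, hcoset,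
    rewrite_xlast_pow_left j.isLt.le, rewrite_xlast_pow_left j.isLt, if_neg j.isLt.ne, one_mul,
    mul_one, xlast, gk_of_pow, rewrite_of_left]
  split_ifs <;> simp_all [rewriteLetter, ZMod.val_cast_of_lt j.isLt]

theorem rewriteKer_schreierKer (h : FreeGroup (Option (Fin n × Fin k))) :
    rewriteKer n k (schreierKer n k h) = h := by
  suffices (rewriteKer n k).comp (schreierKer n k) = MonoidHom.id _ from
    DFunLike.congr_fun this h
  refine FreeGroup.ext_hom _ _ fun
    | none => by
      change (rewrite n k (schreier n k (FreeGroup.of none))).left 1 = _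
      rw [schreier_of_none, rewrite_xlast_pow_left le_rfl, if_pos rfl]
      rfl
    | some (i, j) => by
      change (rewrite n k (schreier n k (FreeGroup.of (some (i, j))))).left 1 = _
      rw [schreier_of_some, rewrite_tau_iterate_yy_left]
      rfl

variable (n k) in
def kerEquiv : FreeGroup (Option (Fin n × Fin k)) ≃* (gk n k).ker where
  toFun := schreierKer n k
  invFun := rewriteKer n k
  left_inv := rewriteKer_schreierKer
  right_inv w := Subtype.ext (schreier_rewriteKer w)
  map_mul' := map_mul _

end Rewrite

theorem schreier_relator (i : Fin n) :
    schreier n k ((List.finRange k).map fun j => FreeGroup.of (some (i, j))).prod =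
      FreeGroup.of i.castSucc ^ k * (xlast n ^ k)⁻¹ := by
  rw [map_list_prod, List.map_map, ← List.ofFn_eq_map, ← List.prod_ofFn_pow_mul_mul_inv_pow_succ]
  simp only [Function.comp_def, schreier_of_some, tau_iterate_yy]

variable (n k) in
def relatorClosure : Subgroup (FreeGroup (Fin (n + 1))) :=
  (Subgroup.normalClosure (schreierKer n k '' quotRels n k)).map (gk n k).ker.subtype

theorem schreier_mem_relatorClosure {r : FreeGroup (Option (Fin n × Fin k))}
    (hr : r ∈ quotRels n k) : schreier n k r ∈ relatorClosure n k :=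
  ⟨schreierKer n k r, Subgroup.subset_normalClosure ⟨r, hr, rfl⟩, rfl⟩

theorem xlast_pow_mem_relatorClosure : xlast n ^ k ∈ relatorClosure n k := by
  simpa [schreier_of_none] using schreier_mem_relatorClosure (n := n) (k := k) (.inl rfl)

theorem of_pow_mul_xlast_pow_inv_mem_relatorClosure (i : Fin n) :
    FreeGroup.of i.castSucc ^ k * (xlast n ^ k)⁻¹ ∈ relatorClosure n k := by
  simpa [schreier_relator] using schreier_mem_relatorClosure (.inr ⟨i, rfl⟩)

theorem conj_mem_relatorClosure {v z : FreeGroup (Fin (n + 1))} (hv : v ∈ (gk n k).ker)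
    (hz : z ∈ relatorClosure n k) : v * z * v⁻¹ ∈ relatorClosure n k := by
  obtain ⟨h, hh, rfl⟩ := hz
  exact ⟨⟨v, hv⟩ * h * ⟨v, hv⟩⁻¹, Subgroup.normalClosure_normal.conj_mem h hh _, rfl⟩

theorem xlast_conj_schreier_mem_relatorClosure {r : FreeGroup (Option (Fin n × Fin k))}
    (hr : r ∈ quotRels n k) : xlast n * schreier n k r * (xlast n)⁻¹ ∈ relatorClosure n k := by
  obtain rfl | ⟨i, rfl⟩ := hr
  · simpa [schreier_of_none, mul_assoc, ← pow_succ', pow_succ] using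
      xlast_pow_mem_relatorClosure (n := n) (k := k)
  · have hy : (yy n i)⁻¹ ∈ (gk n k).ker := by
      simpa using tau_iterate_yy_mem_ker (k := k) i 0
    have key : xlast n * (FreeGroup.of i.castSucc ^ k * (xlast n ^ k)⁻¹) * (xlast n)⁻¹ =
        (yy n i)⁻¹ * (FreeGroup.of i.castSucc ^ k * (xlast n ^ k)⁻¹ * xlast n ^ k) *
          (yy n i)⁻¹⁻¹ * (xlast n ^ k)⁻¹ := by
      rw [yy]; group
    rw [schreier_relator, key]
    exact mul_mem (conj_mem_relatorClosure hy (mul_mem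
      (of_pow_mul_xlast_pow_inv_mem_relatorClosure i) xlast_pow_mem_relatorClosure))
      (inv_mem xlast_pow_mem_relatorClosure)

theorem xlast_conj_mem_relatorClosure {z : FreeGroup (Fin (n + 1))}
    (hz : z ∈ relatorClosure n k) : xlast n * z * (xlast n)⁻¹ ∈ relatorClosure n k := by
  let σ : MulAut (gk n k).ker := MulAut.conjNormal (xlast n)
  have hσ : Subgroup.normalClosure (schreierKer n k '' quotRels n k) ≤
      (Subgroup.normalClosure (schreierKer n k '' quotRels n k)).comap σ.toMonoidHom := by
    refine Subgroup.normalClosure_le_normal ?_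
    rintro _ ⟨r, hr, rfl⟩
    have hconj : ((σ (schreierKer n k r) : (gk n k).ker) : FreeGroup (Fin (n + 1))) ∈
        relatorClosure n k := by
      rw [MulAut.conjNormal_apply]
      exact xlast_conj_schreier_mem_relatorClosure hr
    exact Subgroup.mem_comap.mpr
      ((Subgroup.mem_map_iff_mem (Subgroup.subtype_injective _)).mp hconj)
  obtain ⟨h, hh, rfl⟩ := hz
  exact ⟨σ h, hσ hh, MulAut.conjNormal_apply _ _⟩

theorem exists_mem_ker_eq_mul_xlast_pow [NeZero k] (g : FreeGroup (Fin (n + 1))) :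
    ∃ v ∈ (gk n k).ker, ∃ m : ℕ, g = v * xlast n ^ m := by
  refine ⟨g * (xlast n ^ (toAdd (gk n k g)).val)⁻¹, ?_, _, (inv_mul_cancel_right _ _).symm⟩
  rw [MonoidHom.mem_ker, map_mul, map_inv, xlast, gk_of_pow, ZMod.natCast_zmod_val, ofAdd_toAdd,
    mul_inv_cancel]

theorem schreier_mem_NF {r : FreeGroup (Option (Fin n × Fin k))} (hr : r ∈ quotRels n k) :
    schreier n k r ∈ NF n k := by
  have hgen (x : Fin (n + 1)) : FreeGroup.of x ^ k ∈ NF n k :=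
    Subgroup.subset_normalClosure ⟨x, rfl⟩
  obtain rfl | ⟨i, rfl⟩ := hr
  · rw [schreier_of_none]
    exact hgen _
  · rw [schreier_relator]
    exact mul_mem (hgen _) (inv_mem (hgen _))

theorem relatorClosure_eq [NeZero k] : relatorClosure n k = NF n k := by
  have : (relatorClosure n k).Normal := Subgroup.normal_of_conj_mem exists_mem_ker_eq_mul_xlast_pow
    (fun _ hv _ hz => conj_mem_relatorClosure hv hz) (fun _ hz => xlast_conj_mem_relatorClosure hz)
  refine le_antisymm ?_ (Subgroup.normalClosure_le_normal ?_)
  · have : (NF n k).Normal := Subgroup.normalClosure_normal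
    refine Subgroup.map_le_iff_le_comap.mpr (Subgroup.normalClosure_le_normal ?_)
    rintro _ ⟨r, hr, rfl⟩
    exact schreier_mem_NF hr
  · rintro _ ⟨x, rfl⟩
    induction x using Fin.lastCases with
    | last => exact xlast_pow_mem_relatorClosure
    | cast i =>
      simpa using mul_mem (of_pow_mul_xlast_pow_inv_mem_relatorClosure i)
        xlast_pow_mem_relatorClosure

theorem normalClosure_schreierKer_eq [NeZero k] :
    Subgroup.normalClosure (schreierKer n k '' quotRels n k) =
      (NF n k).subgroupOf (gk n k).ker := by
  rw [← relatorClosure_eq, relatorClosure, Subgroup.subgroupOf,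
    Subgroup.comap_map_eq_self_of_injective (Subgroup.subtype_injective _)]

variable (n k) in
def presentedEquiv [NeZero k] :
    PresentedGroup (quotRels n k) ≃* (gk n k).ker ⧸ (NF n k).subgroupOf (gk n k).ker :=
  QuotientGroup.congr _ _ (kerEquiv n k) <| by
    rw [show ((kerEquiv n k : _ ≃* _) : _ →* _) = schreierKer n k from rfl,
      Subgroup.map_normalClosure _ _ (kerEquiv n k).surjective, normalClosure_schreierKer_eq]

theorem presentedEquiv_of [NeZero k] (o : Option (Fin n × Fin k)) :
    presentedEquiv n k (PresentedGroup.of o) = QuotientGroup.mk (schreierKer n k (.of o)) :=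
  QuotientGroup.congr_mk _ _ _ _ _

section Tietze

variable {m : ℕ}

theorem of_some_last_eq_inv_prod (i : Fin n) :
    (PresentedGroup.of (some (i, Fin.last m)) : PresentedGroup (quotRels n (m + 1))) =
      (List.ofFn fun j : Fin m => PresentedGroup.of (some (i, j.castSucc))).prod⁻¹ := by
  have hrel := PresentedGroup.one_of_mem (rels := quotRels n (m + 1)) (.inr ⟨i, rfl⟩)
  rw [map_list_prod, List.map_map, ← List.ofFn_eq_map, List.ofFn_succ', List.prod_concat]
    at hrel
  exact eq_inv_of_mul_eq_one_right hrel

variable (n m) in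
def eliminateLast : Option (Fin n × Fin (m + 1)) → FreeGroup (Fin n × Fin m)
  | none => 1
  | some (i, j) =>
    Fin.lastCases (List.ofFn fun j : Fin m => FreeGroup.of (i, j)).prod⁻¹
      (fun j => FreeGroup.of (i, j)) j

theorem lift_eliminateLast_eq_one (r : FreeGroup (Option (Fin n × Fin (m + 1))))
    (hr : r ∈ quotRels n (m + 1)) : FreeGroup.lift (eliminateLast n m) r = 1 := by
  obtain rfl | ⟨i, rfl⟩ := hr
  · exact FreeGroup.lift_apply_of
  · rw [map_list_prod, List.map_map, ← List.ofFn_eq_map, List.ofFn_succ', List.prod_concat]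
    simp [eliminateLast]

variable (n m) in
def presentedEquivFree : PresentedGroup (quotRels n (m + 1)) ≃* FreeGroup (Fin n × Fin m) :=
  MonoidHom.toMulEquiv (PresentedGroup.toGroup lift_eliminateLast_eq_one)
    (FreeGroup.lift fun p => PresentedGroup.of (some (p.1, p.2.castSucc)))
    (PresentedGroup.ext fun
      | none => by
        simp only [MonoidHom.comp_apply, PresentedGroup.toGroup.of, eliminateLast, map_one]
        exact (PresentedGroup.one_of_mem (.inl rfl)).symm
      | some (i, j) => by
        induction j using Fin.lastCases with
        | last =>
          simp [PresentedGroup.toGroup.of, eliminateLast, map_list_prod, List.map_ofFn,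
            Function.comp_def, of_some_last_eq_inv_prod]
        | cast j => simp [PresentedGroup.toGroup.of, eliminateLast])
    (FreeGroup.ext_hom _ _ fun p => by simp [PresentedGroup.toGroup.of, eliminateLast])

theorem presentedEquivFree_symm_of (p : Fin n × Fin m) :
    (presentedEquivFree n m).symm (.of p) = PresentedGroup.of (some (p.1, p.2.castSucc)) := by
  simp [presentedEquivFree]

end Tietze

end QuotientPresentation

open QuotientPresentation

/-- the normal closure of `{x_i^k}` lies in `ker g_k`, and the
quotient of `ker g_k` by it admits the presentation
`⟨x_{n+1}^k, τ^j(y_i) | x_{n+1}^k, y_i τ(y_i)⋯τ^{k-1}(y_i)⟩`, which is free of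
rank `n(k-1)` on the generators `τ^j(y_i)`, `0 ≤ j ≤ k-2`. -/
theorem quotient_presentation (n k : ℕ) (hk : 0 < k) :
    NF n k ≤ MonoidHom.ker (gk n k) ∧
    (∃ e : PresentedGroup (quotRels n k) ≃*
        (MonoidHom.ker (gk n k) ⧸ (NF n k).subgroupOf (MonoidHom.ker (gk n k))),
      (∀ w : MonoidHom.ker (gk n k), (w : FreeGroup (Fin (n + 1))) = (xlast n) ^ k →
        e (PresentedGroup.of none) = QuotientGroup.mk w) ∧
      ∀ (i : Fin n) (j : Fin k) (w : MonoidHom.ker (gk n k)),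
        (w : FreeGroup (Fin (n + 1))) = (tau n)^[(j : ℕ)] (yy n i) →
          e (PresentedGroup.of (some (i, j))) = QuotientGroup.mk w) ∧
    ∃ e' : FreeGroup (Fin n × Fin (k - 1)) ≃*
        (MonoidHom.ker (gk n k) ⧸ (NF n k).subgroupOf (MonoidHom.ker (gk n k))),
      ∀ (i : Fin n) (j : Fin (k - 1)) (w : MonoidHom.ker (gk n k)),
        (w : FreeGroup (Fin (n + 1))) = (tau n)^[(j : ℕ)] (yy n i) →
          e' (FreeGroup.of (i, j)) = QuotientGroup.mk w := by
  obtain ⟨m, rfl⟩ : ∃ m, k = m + 1 := Nat.exists_eq_succ_of_ne_zero hk.ne'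
  have hof (o : Option (Fin n × Fin (m + 1))) (w : (gk n (m + 1)).ker)
      (hw : (w : FreeGroup (Fin (n + 1))) = schreier n (m + 1) (.of o)) :
      presentedEquiv n (m + 1) (PresentedGroup.of o) = QuotientGroup.mk w := by
    rw [presentedEquiv_of]
    exact congrArg _ (Subtype.ext hw.symm)
  refine ⟨(relatorClosure_eq (n := n)).ge.trans (Subgroup.map_subtype_le _),
    ⟨presentedEquiv n (m + 1), ?_, ?_⟩,
    (presentedEquivFree n m).symm.trans (presentedEquiv n (m + 1)), ?_⟩
  · exact fun w hw => hof none w (hw.trans schreier_of_none.symm)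
  · exact fun i j w hw => hof _ w (hw.trans (schreier_of_some i j).symm)
  · intro i j w hw
    rw [MulEquiv.trans_apply, presentedEquivFree_symm_of]
    exact hof _ w (hw.trans (schreier_of_some i j.castSucc).symm)
end

section
/- Let F be the free group on x_1, x_2, x_3 and k = 2: let g : F → Z/2 send each generator to 1, let τ(w)=x_3 w x_3^{-1}, y_1 = x_1 x_3^{-1}, y_2 = x_2 x_3^{-1}, and let Q be the quotient of ker(g) by the normal closure of {x_1^2, x_2^2, x_3^2}. Then Q is a free group of rank 2, freely generated by the images of y_1 and y_2. -/
/-- `g : F(x₁,x₂,x₃) → Z/2` sending each generator to `1`. -/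
def g3 : FreeGroup (Fin 3) →* Multiplicative (ZMod 2) :=
  FreeGroup.lift fun _ => Multiplicative.ofAdd (1 : ZMod 2)

/-- `y₁ = x₁ x₃⁻¹`. -/
def y1 : FreeGroup (Fin 3) := FreeGroup.of 0 * (FreeGroup.of 2)⁻¹

/-- `y₂ = x₂ x₃⁻¹`. -/
def y2 : FreeGroup (Fin 3) := FreeGroup.of 1 * (FreeGroup.of 2)⁻¹

/-- The normal closure, inside `ker g`, of `{x₁², x₂², x₃²}`. -/
def Nsq : Subgroup (MonoidHom.ker g3) :=
  Subgroup.normalClosure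
    {w : MonoidHom.ker g3 | ∃ i : Fin 3, (w : FreeGroup (Fin 3)) = FreeGroup.of i ^ 2}

instance : Nsq.Normal := Subgroup.normalClosure_normal

/-!
Map `F(x₁, x₂, x₃)` to `F(a₁, a₂) ⋊ ℤ/2`, where the generator `c` of `ℤ/2` acts by inverting
`a₁` and `a₂`, via `xᵢ ↦ (aᵢ, c)` and `x₃ ↦ (1, c)`. The images of the `xᵢ` are involutions, and on
`ker g` the first coordinate is a homomorphism; it kills the squares and sends `yᵢ ↦ aᵢ`, so it
descends to `Q → F(a₁, a₂)`, a left inverse of `aᵢ ↦ yᵢ`. That section is onto because `ker g` is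
generated by `x₃²`, `yᵢ`, `τ(yᵢ)` (this subgroup is normalised by `x₃` and contains `x₃²` and
`xᵢx₃⁻¹`, so together with its coset through `x₃` it is everything), and in `Q` we have `x₃² = 1`
and `τ(yᵢ) = yᵢ⁻¹` since `yᵢ τ(yᵢ) = xᵢ² x₃⁻²`.
-/

open Subgroup

section IndexTwo

variable {G : Type*} [Group G] {K : Subgroup G} {t : G} {s : Set G}

theorem Subgroup.mem_or_mul_inv_mem_of_closure_eq_top (hs : closure s = ⊤)
    (hK : ∀ k ∈ K, t * k * t⁻¹ ∈ K) (ht : t ^ 2 ∈ K) (hsK : ∀ x ∈ s, x * t⁻¹ ∈ K) (w : G) :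
    w ∈ K ∨ w * t⁻¹ ∈ K := by
  have hK' : ∀ k ∈ K, t⁻¹ * k * t ∈ K := fun k hk => by
    convert mul_mem (mul_mem (inv_mem ht) (hK k hk)) ht using 1
    group
  induction (hs ▸ mem_top w : w ∈ closure s) using closure_induction with
  | mem x hx => exact .inr (hsK x hx)
  | one => exact .inl K.one_mem
  | mul x y _ _ hx hy =>
    rcases hx with hx | hx <;> rcases hy with hy | hy
    · exact .inl (mul_mem hx hy)
    · exact .inr (by simpa only [mul_assoc] using mul_mem hx hy)
    · exact .inr (by convert mul_mem hx (hK y hy) using 1; group)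
    · exact .inl (by convert mul_mem (mul_mem hx (hK _ hy)) ht using 1; group)
  | inv x _ hx =>
    rcases hx with hx | hx
    · exact .inl (inv_mem hx)
    · exact .inr (by convert mul_mem (hK' _ (inv_mem hx)) (inv_mem ht) using 1; group)

theorem MonoidHom.ker_le_of_closure_eq_top {M : Type*} [Group M] {f : G →* M}
    (hs : closure s = ⊤) (hK : ∀ k ∈ K, t * k * t⁻¹ ∈ K) (ht : t ^ 2 ∈ K)
    (hsK : ∀ x ∈ s, x * t⁻¹ ∈ K) (hKf : K ≤ f.ker) (hft : f t ≠ 1) : f.ker ≤ K := by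
  intro w hw
  refine (K.mem_or_mul_inv_mem_of_closure_eq_top hs hK ht hsK w).resolve_right fun h => hft ?_
  simpa [MonoidHom.mem_ker.1 hw] using hKf h

end IndexTwo

theorem Subgroup.closure_subtype_preimage_eq_top {G : Type*} [Group G] {H : Subgroup G}
    {s : Set G} (h : closure s = H) : closure (H.subtype ⁻¹' s) = ⊤ := by
  subst h
  exact closure_preimage_eq_top s

def zmodTwoLift {M : Type*} [Group M] (m : M) (hm : m * m = 1) :
    Multiplicative (ZMod 2) →* M :=
  AddMonoidHom.toMultiplicativeLeft <| ZMod.lift 2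
    ⟨zmultiplesHom _ (Additive.ofMul m), by simp [two_zsmul, ← ofMul_mul, hm]⟩

@[simp]
theorem zmodTwoLift_ofAdd_one {M : Type*} [Group M] (m : M) (hm : m * m = 1) :
    zmodTwoLift m hm (Multiplicative.ofAdd 1) = m :=
  congrArg Additive.toMul (ZMod.lift_coe 2 _ 1 |>.trans (one_zsmul _))

namespace FreeGroup

variable (α : Type*)

def invGenerators : MulAut (FreeGroup α) :=
  MonoidHom.toMulEquiv (lift fun a => (of a)⁻¹) (lift fun a => (of a)⁻¹)
    (by ext; simp) (by ext; simp)

def invGeneratorsAction : Multiplicative (ZMod 2) →* MulAut (FreeGroup α) :=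
  zmodTwoLift (invGenerators α) <|
    MulEquiv.toMonoidHom_injective (ext_hom _ _ fun a => by simp [invGenerators, MulAut.mul_def])

variable {α}

@[simp]
theorem invGenerators_of (a : α) : invGenerators α (of a) = (of a)⁻¹ := by
  simp [invGenerators]

@[simp]
theorem invGeneratorsAction_ofAdd_one :
    invGeneratorsAction α (Multiplicative.ofAdd 1) = invGenerators α :=
  zmodTwoLift_ofAdd_one _ _

theorem semidirect_mk_sq_eq_one {x : FreeGroup α} (hx : invGenerators α x = x⁻¹) :
    (⟨x, .ofAdd 1⟩ : FreeGroup α ⋊[invGeneratorsAction α] Multiplicative (ZMod 2)) ^ 2 = 1 := by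
  ext
  · simp [pow_two, SemidirectProduct.mul_left, hx]
  · simp only [pow_two, SemidirectProduct.mul_right, SemidirectProduct.one_right]
    decide

theorem semidirect_mk_mul_inv_mk_one (x : FreeGroup α) :
    (⟨x, .ofAdd 1⟩ * ⟨1, .ofAdd 1⟩⁻¹ :
      FreeGroup α ⋊[invGeneratorsAction α] Multiplicative (ZMod 2)) = .inl x := by
  ext <;> simp

end FreeGroup

open FreeGroup

def toSemidirect :
    FreeGroup (Fin 3) →* FreeGroup (Fin 2) ⋊[invGeneratorsAction (Fin 2)] Multiplicative (ZMod 2) :=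
  FreeGroup.lift <| Fin.lastCases ⟨1, .ofAdd 1⟩ fun i => ⟨of i, .ofAdd 1⟩

theorem toSemidirect_of_castSucc (i : Fin 2) :
    toSemidirect (of i.castSucc) = ⟨of i, .ofAdd 1⟩ := by
  rw [toSemidirect, lift_apply_of, Fin.lastCases_castSucc]

theorem toSemidirect_of_two : toSemidirect (of 2) = ⟨1, .ofAdd 1⟩ := by
  rw [toSemidirect, lift_apply_of]
  rfl

theorem rightHom_comp_toSemidirect : SemidirectProduct.rightHom.comp toSemidirect = g3 := by
  refine ext_hom _ _ fun i => Fin.lastCases ?_ (fun i => ?_) i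
  · simp [toSemidirect_of_two, g3]
  · simp [toSemidirect_of_castSucc, g3]

theorem toSemidirect_of_sq (i : Fin 3) : toSemidirect (of i ^ 2) = 1 := by
  rw [map_pow]
  refine Fin.lastCases ?_ (fun i => ?_) i
  · exact toSemidirect_of_two ▸ semidirect_mk_sq_eq_one (by simp)
  · exact toSemidirect_of_castSucc i ▸ semidirect_mk_sq_eq_one (by simp)

def yGen (i : Fin 2) : FreeGroup (Fin 3) := of i.castSucc * (of 2)⁻¹

theorem toSemidirect_yGen (i : Fin 2) : toSemidirect (yGen i) = .inl (of i) := by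
  rw [yGen, _root_.map_mul, _root_.map_inv, toSemidirect_of_castSucc, toSemidirect_of_two,
    semidirect_mk_mul_inv_mk_one]

theorem of_sq_mem_ker (i : Fin 3) : of i ^ 2 ∈ g3.ker := by
  simp [g3]
  decide

theorem yGen_mem_ker (i : Fin 2) : yGen i ∈ g3.ker := by
  simp [yGen, g3]

def yKer (i : Fin 2) : g3.ker := ⟨yGen i, yGen_mem_ker i⟩

def kerToFree : g3.ker →* FreeGroup (Fin 2) where
  toFun w := (toSemidirect w).left
  map_one' := by simp
  map_mul' v w := by
    have hv : (toSemidirect v).right = 1 := by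
      rw [← SemidirectProduct.rightHom_eq_right, ← MonoidHom.comp_apply,
        rightHom_comp_toSemidirect]
      exact v.2
    simp [SemidirectProduct.mul_left, hv]

theorem kerToFree_yKer (i : Fin 2) : kerToFree (yKer i) = of i :=
  congrArg SemidirectProduct.left (toSemidirect_yGen i)

theorem Nsq_le_ker_kerToFree : Nsq ≤ kerToFree.ker := by
  refine normalClosure_le_normal ?_
  rintro w ⟨i, hi⟩
  exact congrArg SemidirectProduct.left (hi ▸ toSemidirect_of_sq i)

local notation "Q" => g3.ker ⧸ Nsq

def quotientToFree : Q →* FreeGroup (Fin 2) :=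
  QuotientGroup.lift Nsq kerToFree Nsq_le_ker_kerToFree

def freeToQuotient : FreeGroup (Fin 2) →* Q :=
  FreeGroup.lift fun i => (yKer i : Q)

theorem freeToQuotient_of (i : Fin 2) : freeToQuotient (of i) = (yKer i : Q) :=
  lift_apply_of

theorem quotientToFree_comp_freeToQuotient : quotientToFree.comp freeToQuotient = .id _ :=
  ext_hom _ _ fun i => by simp [quotientToFree, freeToQuotient_of, kerToFree_yKer]

theorem freeToQuotient_injective : Function.Injective freeToQuotient :=
  Function.LeftInverse.injective (g := quotientToFree) <|
    DFunLike.congr_fun quotientToFree_comp_freeToQuotient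

def schreierGens : Set (FreeGroup (Fin 3)) :=
  insert (of 2 ^ 2) (Set.range yGen ∪ Set.range fun i => of 2 * yGen i * (of 2)⁻¹)

theorem schreierGens_subset_ker : schreierGens ⊆ g3.ker := by
  rintro _ (rfl | ⟨i, rfl⟩ | ⟨i, rfl⟩)
  · exact of_sq_mem_ker 2
  · exact yGen_mem_ker i
  · exact (MonoidHom.normal_ker g3).conj_mem _ (yGen_mem_ker i) _

theorem conj_mem_closure_schreierGens {k : FreeGroup (Fin 3)} (hk : k ∈ closure schreierGens) :
    of 2 * k * (of 2)⁻¹ ∈ closure schreierGens := by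
  have hsq : of 2 ^ 2 ∈ closure schreierGens := subset_closure (.inl rfl)
  suffices closure schreierGens ≤ (closure schreierGens).comap (MulAut.conj (of 2)).toMonoidHom
    from this hk
  refine closure_le _ |>.2 ?_
  rintro _ (rfl | ⟨i, rfl⟩ | ⟨i, rfl⟩) <;> simp only [SetLike.mem_coe, mem_comap,
    MulEquiv.coe_toMonoidHom, MulAut.conj_apply]
  · convert hsq using 1; group
  · exact subset_closure (.inr (.inr ⟨i, rfl⟩))
  · have hy : yGen i ∈ closure schreierGens := subset_closure (.inr (.inl ⟨i, rfl⟩))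
    convert mul_mem (mul_mem hsq hy) (inv_mem hsq) using 1
    simp only [pow_two]; group

theorem closure_schreierGens : closure schreierGens = g3.ker := by
  refine le_antisymm ((closure_le _).2 schreierGens_subset_ker) ?_
  refine MonoidHom.ker_le_of_closure_eq_top (s := Set.range of) (t := of 2)
    (closure_range_of _) (fun k hk => conj_mem_closure_schreierGens hk)
    (subset_closure (.inl rfl)) ?_ ((closure_le _).2 schreierGens_subset_ker) (by simp [g3])
  rintro _ ⟨i, rfl⟩
  refine Fin.lastCases ?_ (fun i => ?_) i
  · simp
  · exact subset_closure (.inr (.inl ⟨i, rfl⟩))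

theorem mk_eq_one_of_coe_eq_sq {w : g3.ker} {i : Fin 3}
    (hw : (w : FreeGroup (Fin 3)) = of i ^ 2) : (w : Q) = 1 :=
  (QuotientGroup.eq_one_iff w).2 (subset_normalClosure ⟨i, hw⟩)

theorem mk_eq_inv_of_coe_eq_conj {w : g3.ker} {i : Fin 2}
    (hw : (w : FreeGroup (Fin 3)) = of 2 * yGen i * (of 2)⁻¹) :
    (w : Q) = (yKer i : Q)⁻¹ := by
  have hprod :
      yKer i * w = ⟨_, of_sq_mem_ker i.castSucc⟩ * (⟨_, of_sq_mem_ker 2⟩ : g3.ker)⁻¹ := by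
    ext
    simp only [Subgroup.coe_mul, Subgroup.coe_inv, hw, yKer, yGen, pow_two]
    group
  refine eq_inv_of_mul_eq_one_right ?_
  rw [← QuotientGroup.mk_mul, hprod, QuotientGroup.mk_mul, QuotientGroup.mk_inv,
    mk_eq_one_of_coe_eq_sq rfl, mk_eq_one_of_coe_eq_sq rfl, inv_one, one_mul]

theorem freeToQuotient_surjective : Function.Surjective freeToQuotient := by
  refine MonoidHom.range_eq_top.1 (eq_top_iff.2 ?_)
  rw [← map_top_of_surjective _ (QuotientGroup.mk'_surjective Nsq),
    ← closure_subtype_preimage_eq_top closure_schreierGens, MonoidHom.map_closure, closure_le]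
  rintro _ ⟨w, hw | ⟨i, hw⟩ | ⟨i, hw⟩, rfl⟩
  · exact ⟨1, by simp [mk_eq_one_of_coe_eq_sq hw]⟩
  · obtain rfl : w = yKer i := Subtype.ext hw.symm
    exact ⟨of i, freeToQuotient_of i⟩
  · exact ⟨(of i)⁻¹, by simp [freeToQuotient_of, mk_eq_inv_of_coe_eq_conj hw.symm]⟩

/-- case `n = 2`, `k = 2`: `Q = ker(g)/⟪x₁², x₂², x₃²⟫` is a free
group of rank `2`, freely generated by the images of `y₁` and `y₂`. -/
theorem quotient_free_rank_two :
    ∃ e : FreeGroup (Fin 2) ≃* (MonoidHom.ker g3 ⧸ Nsq),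
      (∀ w : MonoidHom.ker g3, (w : FreeGroup (Fin 3)) = y1 →
        e (FreeGroup.of 0) = QuotientGroup.mk w) ∧
      ∀ w : MonoidHom.ker g3, (w : FreeGroup (Fin 3)) = y2 →
        e (FreeGroup.of 1) = QuotientGroup.mk w := by
  refine ⟨.ofBijective freeToQuotient ⟨freeToQuotient_injective, freeToQuotient_surjective⟩,
    fun w hw => ?_, fun w hw => ?_⟩
  · obtain rfl : w = yKer 0 := Subtype.ext hw
    exact freeToQuotient_of 0
  · obtain rfl : w = yKer 1 := Subtype.ext hw
    exact freeToQuotient_of 1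
end

section
/- Let F be the free group on x_1,...,x_{n+1} and let H ≤ F be the subgroup generated by x_{n+1}^k together with all elements x_{n+1}^j x_i x_{n+1}^{-(j+1)} for 1 ≤ i ≤ n and 0 ≤ j ≤ k-1. Then H equals the kernel of the homomorphism g_k : F → Z/k sending each generator to 1. -/
namespace Subgroup

variable {G : Type*} [Group G]

theorem conj_pow_mem_of_conj_mem {H : Subgroup G} {x : G}
    (hconj : ∀ h ∈ H, x * h * x⁻¹ ∈ H) (m : ℕ) {h : G} (hh : h ∈ H) :
    x ^ m * h * (x ^ m)⁻¹ ∈ H := by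
  induction m with
  | zero => simpa using hh
  | succ m ih => simpa [pow_succ', mul_assoc] using hconj _ ih

theorem mem_normalizer_of_conj_mem_of_pow_mem {H : Subgroup G} {x : G} {k : ℕ} (hk : 0 < k)
    (hconj : ∀ h ∈ H, x * h * x⁻¹ ∈ H) (hxk : x ^ k ∈ H) :
    x ∈ normalizer (H : Set G) := by
  refine mem_normalizer_iff.2 fun h => ⟨hconj h, fun hxh => ?_⟩
  obtain ⟨m, rfl⟩ : ∃ m, k = m + 1 := ⟨k - 1, by omega⟩
  -- `x⁻¹ = x ^ m * (x ^ (m + 1))⁻¹`, and both factors conjugate `H` into itself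
  have hh : h = x ^ m * ((x ^ (m + 1))⁻¹ * (x * h * x⁻¹) * x ^ (m + 1)) * (x ^ m)⁻¹ := by
    rw [pow_succ]; group
  rw [hh]
  exact conj_pow_mem_of_conj_mem hconj m (mul_mem (mul_mem (inv_mem hxk) hxh) hxk)

end Subgroup

section CyclicGens

variable {G ι : Type*} [Group G]

/-- `x ^ k` together with `x ^ j * a i * x ^ -(j + 1) = τ ^ j (a i * x⁻¹)` for `j < k`, where
`τ` is conjugation by `x`. -/
def cyclicGens (x : G) (a : ι → G) (k : ℕ) : Set G :=
  {x ^ k} ∪ {w | ∃ i j, j < k ∧ w = x ^ j * a i * (x ^ (j + 1))⁻¹}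

variable {x : G} {a : ι → G} {k : ℕ}

theorem pow_mem_closure_cyclicGens : x ^ k ∈ Subgroup.closure (cyclicGens x a k) :=
  Subgroup.subset_closure (Or.inl rfl)

theorem mem_closure_cyclicGens_of_lt (i : ι) {j : ℕ} (hj : j < k) :
    x ^ j * a i * (x ^ (j + 1))⁻¹ ∈ Subgroup.closure (cyclicGens x a k) :=
  Subgroup.subset_closure (Or.inr ⟨i, j, hj, rfl⟩)

theorem conj_mem_closure_cyclicGens (hk : 0 < k) {h : G}
    (hh : h ∈ Subgroup.closure (cyclicGens x a k)) :
    x * h * x⁻¹ ∈ Subgroup.closure (cyclicGens x a k) := by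
  set H := Subgroup.closure (cyclicGens x a k)
  suffices H ≤ H.comap (MulAut.conj x).toMonoidHom from this hh
  refine (Subgroup.closure_le _).2 ?_
  rintro _ (rfl | ⟨i, j, hj, rfl⟩) <;> simp only [SetLike.mem_coe, Subgroup.mem_comap,
    MulEquiv.coe_toMonoidHom, MulAut.conj_apply]
  · simpa [← pow_succ', pow_succ] using pow_mem_closure_cyclicGens
  · rcases Nat.lt_or_ge (j + 1) k with hj' | hj'
    · have : x * (x ^ j * a i * (x ^ (j + 1))⁻¹) * x⁻¹ =
          x ^ (j + 1) * a i * (x ^ (j + 1 + 1))⁻¹ := by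
        simp only [pow_succ']; group
      exact this ▸ mem_closure_cyclicGens_of_lt i hj'
    · have hjk : j + 1 = k := by omega
      -- the shift wraps around: `τ ^ k = τ ^ 0` up to conjugation by `x ^ k ∈ H`
      have : x * (x ^ j * a i * (x ^ (j + 1))⁻¹) * x⁻¹ =
          x ^ k * (x ^ 0 * a i * (x ^ (0 + 1))⁻¹) * (x ^ k)⁻¹ := by
        rw [← hjk]; simp only [pow_succ']; group
      rw [this]
      exact mul_mem (mul_mem pow_mem_closure_cyclicGens (mem_closure_cyclicGens_of_lt i hk))
        (inv_mem pow_mem_closure_cyclicGens)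

theorem zpowers_le_normalizer_closure_cyclicGens (hk : 0 < k) :
    Subgroup.zpowers x ≤ Subgroup.normalizer (Subgroup.closure (cyclicGens x a k) : Set G) :=
  Subgroup.zpowers_le.2 <| Subgroup.mem_normalizer_of_conj_mem_of_pow_mem hk
    (fun _ => conj_mem_closure_cyclicGens hk) pow_mem_closure_cyclicGens

theorem exists_mem_closure_cyclicGens_mul_zpow (hk : 0 < k) {g : G}
    (hg : g ∈ Subgroup.closure (insert x (Set.range a))) :
    ∃ h ∈ Subgroup.closure (cyclicGens x a k), ∃ m : ℤ, h * x ^ m = g := by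
  set H := Subgroup.closure (cyclicGens x a k)
  have hle : Subgroup.closure (insert x (Set.range a)) ≤ H ⊔ Subgroup.zpowers x := by
    refine (Subgroup.closure_le _).2 (Set.insert_subset_iff.2 ⟨?_, ?_⟩)
    · exact Subgroup.mem_sup_right (Subgroup.mem_zpowers x)
    · rintro _ ⟨i, rfl⟩
      have : a i = (x ^ 0 * a i * (x ^ (0 + 1))⁻¹) * x := by group
      rw [SetLike.mem_coe, this]
      exact Subgroup.mul_mem_sup (mem_closure_cyclicGens_of_lt i hk) (Subgroup.mem_zpowers x)
  have := Subgroup.coe_mul_of_right_le_normalizer_left H _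
    (zpowers_le_normalizer_closure_cyclicGens (a := a) hk)
  obtain ⟨h, hh, _, ⟨m, rfl⟩, rfl⟩ := Set.mem_mul.1 (this ▸ SetLike.mem_coe.2 (hle hg))
  exact ⟨h, hh, m, rfl⟩

theorem closure_cyclicGens_le_ker {M : Type*} [Group M] {φ : G →* M} (hpow : φ x ^ k = 1)
    (ha : ∀ i, φ (a i) = φ x) : Subgroup.closure (cyclicGens x a k) ≤ φ.ker := by
  refine (Subgroup.closure_le _).2 ?_
  rintro _ (rfl | ⟨i, j, hj, rfl⟩)
  · simpa using hpow
  · simp [ha, pow_succ]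

end CyclicGens

theorem closure_insert_xlast_range_castSucc (n : ℕ) :
    Subgroup.closure (insert (xlast n) (Set.range fun i : Fin n => FreeGroup.of i.castSucc)) =
      ⊤ := by
  refine eq_top_iff.2 ((FreeGroup.closure_range_of _).symm.le.trans (Subgroup.closure_mono ?_))
  rintro _ ⟨i, rfl⟩
  induction i using Fin.lastCases with
  | last => exact Set.mem_insert _ _
  | cast i => exact Set.mem_insert_of_mem _ ⟨i, rfl⟩

theorem gk_of (n k : ℕ) (i : Fin (n + 1)) : gk n k (FreeGroup.of i) = Multiplicative.ofAdd 1 :=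
  FreeGroup.lift_apply_of

theorem gk_xlast_zpow (n k : ℕ) (m : ℤ) :
    gk n k (xlast n ^ m) = Multiplicative.ofAdd (m : ZMod k) := by
  simp [xlast, gk_of, ← ofAdd_zsmul]

/-- the subgroup generated by `x_{n+1}^k` together with the
elements `x_{n+1}^j x_i x_{n+1}^{-(j+1)}` (`1 ≤ i ≤ n`, `0 ≤ j ≤ k-1`) is
exactly the kernel of `g_k`. -/
theorem closure_eq_ker (n k : ℕ) (hk : 0 < k) :
    Subgroup.closure
      ({(xlast n) ^ k} ∪
        {w | ∃ (i : Fin n) (j : ℕ), j < k ∧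
          w = (xlast n) ^ j * FreeGroup.of i.castSucc * ((xlast n) ^ (j + 1))⁻¹}) =
      MonoidHom.ker (gk n k) := by
  change Subgroup.closure (cyclicGens (xlast n) (fun i : Fin n => FreeGroup.of i.castSucc) k) = _
  have hle : Subgroup.closure (cyclicGens (xlast n) (fun i : Fin n => FreeGroup.of i.castSucc) k)
      ≤ (gk n k).ker :=
    closure_cyclicGens_le_ker (by simp [xlast, gk_of, ← ofAdd_nsmul])
      fun i => by simp [xlast, gk_of]
  refine le_antisymm hle fun g hg => ?_
  obtain ⟨h, hh, m, rfl⟩ := exists_mem_closure_cyclicGens_mul_zpow hk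
    ((closure_insert_xlast_range_castSucc n).symm ▸ Subgroup.mem_top g)
  have hm : (m : ZMod k) = 0 := by
    simpa [MonoidHom.mem_ker.1 (hle hh), gk_xlast_zpow] using MonoidHom.mem_ker.1 hg
  obtain ⟨q, rfl⟩ := (ZMod.intCast_zmod_eq_zero_iff_dvd m k).1 hm
  rw [zpow_mul, zpow_natCast]
  exact mul_mem hh (zpow_mem pow_mem_closure_cyclicGens q)
end
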